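/- arXiv:2508.07886 — 3 statements merged into one kernel-verified Lean document; each statement's English description precedes it below -/
import Mathlib

section
/- Let H satisfy: H odd, H(0)=0, H'(0)=1, H' > 0, H'' < 0 on (0,∞), and there exists z_H > 0 with H''' ≤ 0 on [0, z_H] and H''' > 0 on (z_H, ∞), and H increases to 1 at +∞. Define G(x) = x(1 + H'(x)) - 2H(x). Then there exists a unique d₁ > 0 with G(d₁) = 0; moreover G < 0 on (0, d₁) and G > 0 on (d₁, ∞). -/
/-!
Write `φ = G' = 1 - H' + x H''`, so that `φ 0 = 0` and `φ' = x H'''`. On `(0, z_H]` the function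
`φ` is antitone, and it is even negative there: otherwise it would vanish on an interval `[0, x]`,
forcing `H''` to be constant there, against `H'' 0 = 0` (oddness) and `H'' x < 0`. Beyond `z_H`,
`φ` is strictly increasing, and it must become positive since `G x ≥ x - 2 → ∞`. Hence `φ` changes
sign exactly once, at some `c > 0`; then `G 0 = 0`, `G` decreases on `[0, c]` and increases to `∞`
afterwards, so it has exactly one positive zero.
-/

open Set Filter Topology

theorem exists_pos_zero_of_neg_of_strictMonoOn {f : ℝ → ℝ} {c b : ℝ} (hc : 0 < c)
    (hneg : ∀ x ∈ Ioc 0 c, f x < 0) (hmono : StrictMonoOn f (Ici c)) (hcb : c ≤ b)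
    (hcont : ContinuousOn f (Icc c b)) (hb : 0 < f b) :
    ∃ d > (0:ℝ), f d = 0 ∧ (∀ x > (0:ℝ), f x = 0 → x = d) ∧
      (∀ x, 0 < x → x < d → f x < 0) ∧ (∀ x, d < x → 0 < f x) := by
  obtain ⟨d, ⟨hcd, -⟩, hd⟩ := intermediate_value_Ioo hcb hcont ⟨hneg c ⟨hc, le_rfl⟩, hb⟩
  have hlt : ∀ x, 0 < x → x < d → f x < 0 := by
    intro x hx hxd
    rcases le_or_gt x c with hxc | hxc
    · exact hneg x ⟨hx, hxc⟩
    · exact hd ▸ hmono hxc.le hcd.le hxd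
  have hgt : ∀ x, d < x → 0 < f x := fun x hdx => hd ▸ hmono hcd.le (hcd.trans hdx).le hdx
  refine ⟨d, hc.trans hcd, hd, fun x hx hfx => ?_, hlt, hgt⟩
  exact le_antisymm (not_lt.1 fun h => (hgt x h).ne' hfx) (not_lt.1 fun h => (hlt x hx h).ne hfx)

theorem exists_pos_zero_of_deriv_neg_of_deriv_pos {f : ℝ → ℝ} {c : ℝ} (hc : 0 < c)
    (hf : Differentiable ℝ f) (hf0 : f 0 = 0) (hneg : ∀ x, 0 < x → x < c → deriv f x < 0)
    (hpos : ∀ x, c < x → 0 < deriv f x) (htop : Tendsto f atTop atTop) :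
    ∃ d > (0:ℝ), f d = 0 ∧ (∀ x > (0:ℝ), f x = 0 → x = d) ∧
      (∀ x, 0 < x → x < d → f x < 0) ∧ (∀ x, d < x → 0 < f x) := by
  have hanti : StrictAntiOn f (Icc 0 c) :=
    strictAntiOn_of_deriv_neg (convex_Icc 0 c) hf.continuous.continuousOn fun x hx => by
      rw [interior_Icc] at hx
      exact hneg x hx.1 hx.2
  have hmono : StrictMonoOn f (Ici c) :=
    strictMonoOn_of_deriv_pos (convex_Ici c) hf.continuous.continuousOn fun x hx => by
      rw [interior_Ici] at hx
      exact hpos x hx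
  obtain ⟨b, hfb, hcb⟩ := ((htop.eventually_gt_atTop 0).and (eventually_ge_atTop c)).exists
  refine exists_pos_zero_of_neg_of_strictMonoOn hc (fun x hx => ?_) hmono hcb
    hf.continuous.continuousOn hfb
  exact hf0 ▸ hanti ⟨le_rfl, hc.le⟩ (Ioc_subset_Icc_self hx) hx.1

theorem exists_ge_deriv_pos_of_tendsto_atTop {f : ℝ → ℝ} (hf : Differentiable ℝ f)
    (htop : Tendsto f atTop atTop) (a : ℝ) : ∃ b, a ≤ b ∧ 0 < deriv f b := by
  by_contra! h
  have hanti : AntitoneOn f (Ici a) :=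
    antitoneOn_of_deriv_nonpos (convex_Ici a) hf.continuous.continuousOn hf.differentiableOn
      fun x hx => h x (interior_subset hx)
  obtain ⟨b, hfb, hab⟩ := ((htop.eventually_gt_atTop (f a)).and (eventually_ge_atTop a)).exists
  exact (hanti self_mem_Ici hab hab).not_gt hfb

theorem deriv_deriv_eq_zero_of_odd {H : ℝ → ℝ} (hodd : ∀ x, H (-x) = -H x) :
    deriv (deriv H) 0 = 0 := by
  have heven : ∀ x, deriv H (-x) = deriv H x := fun x => by
    have := deriv_comp_neg (f := H) (x := x)
    simp only [hodd, deriv.fun_neg] at this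
    linarith
  have := deriv_comp_neg (f := deriv H) (x := 0)
  simp only [heven, neg_zero] at this
  linarith

section

variable {H : ℝ → ℝ}

theorem hasDerivAt_mul_one_add_deriv_sub_two_mul (hH : ContDiff ℝ 2 H) (x : ℝ) :
    HasDerivAt (fun x => x * (1 + deriv H x) - 2 * H x)
      (1 - deriv H x + x * deriv (deriv H) x) x := by
  have hH' : Differentiable ℝ (deriv H) := (hH.deriv' (n := 1)).differentiable one_ne_zero
  refine (((hasDerivAt_id' x).fun_mul ((hH' x).hasDerivAt.const_add 1)).fun_sub
    ((hH.differentiable two_ne_zero x).hasDerivAt.const_mul 2)).congr_deriv ?_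
  ring

theorem hasDerivAt_one_sub_deriv_add_mul_deriv_deriv (hH : ContDiff ℝ 3 H) (x : ℝ) :
    HasDerivAt (fun x => 1 - deriv H x + x * deriv (deriv H) x)
      (x * deriv (deriv (deriv H)) x) x := by
  have hH2 : ContDiff ℝ 2 (deriv H) := hH.deriv'
  have hH3 : Differentiable ℝ (deriv (deriv H)) :=
    (hH2.deriv' (n := 1)).differentiable one_ne_zero
  refine (((hH2.differentiable two_ne_zero x).hasDerivAt.const_sub 1).fun_add
    ((hasDerivAt_id' x).fun_mul (hH3 x).hasDerivAt)).congr_deriv ?_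
  ring

theorem tendsto_mul_one_add_deriv_sub_two_mul_atTop (hH : Differentiable ℝ H)
    (hmono : ∀ x, 0 ≤ deriv H x) (hlim : Tendsto H atTop (𝓝 1)) :
    Tendsto (fun x => x * (1 + deriv H x) - 2 * H x) atTop atTop := by
  have hle : ∀ x, H x ≤ 1 := (monotone_of_deriv_nonneg hH hmono).ge_of_tendsto hlim
  refine tendsto_atTop_mono' _ ?_ (tendsto_atTop_add_const_right _ (-2) tendsto_id)
  filter_upwards [eventually_ge_atTop 0] with x hx
  simp only [id]
  nlinarith [mul_nonneg hx (hmono x), hle x]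

theorem one_sub_deriv_add_mul_deriv_deriv_neg (hH : ContDiff ℝ 3 H) {a : ℝ}
    (h1 : deriv H 0 = 1) (h20 : deriv (deriv H) 0 = 0)
    (hconc : ∀ x > 0, deriv (deriv H) x < 0)
    (h3 : ∀ x ∈ Icc 0 a, deriv (deriv (deriv H)) x ≤ 0) :
    ∀ x ∈ Ioc 0 a, 1 - deriv H x + x * deriv (deriv H) x < 0 := by
  set φ := fun x => 1 - deriv H x + x * deriv (deriv H) x
  have hφ' := hasDerivAt_one_sub_deriv_add_mul_deriv_deriv hH
  have hφ : Differentiable ℝ φ := fun x => (hφ' x).differentiableAt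
  have hanti : AntitoneOn φ (Icc 0 a) :=
    antitoneOn_of_deriv_nonpos (convex_Icc 0 a) hφ.continuous.continuousOn hφ.differentiableOn
      fun t ht => by
        rw [interior_Icc] at ht
        rw [(hφ' t).deriv]
        exact mul_nonpos_of_nonneg_of_nonpos ht.1.le (h3 t (Ioo_subset_Icc_self ht))
  have hφ0 : φ 0 = 0 := by simp [φ, h1]
  rintro x ⟨hx, hxa⟩
  -- Otherwise the antitone `φ` vanishes on `[0, x]`, whereas `H'' x < H'' 0 = 0` forces
  -- `φ' ξ = ξ * H''' ξ < 0` at some `ξ ∈ (0, x)` by the mean value theorem.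
  by_contra! hφx
  have hzero : ∀ t ∈ Icc 0 x, φ t = 0 := by
    intro t ⟨ht0, htx⟩
    have hta : t ∈ Icc 0 a := ⟨ht0, htx.trans hxa⟩
    exact le_antisymm (hφ0 ▸ hanti ⟨le_rfl, hx.le.trans hxa⟩ hta ht0)
      (hφx.trans (hanti hta ⟨hx.le, hxa⟩ htx))
  have hH2 : Differentiable ℝ (deriv (deriv H)) :=
    (hH.deriv'.deriv' (n := 1)).differentiable one_ne_zero
  obtain ⟨ξ, hξ, hslope⟩ :=
    exists_deriv_eq_slope (deriv (deriv H)) hx hH2.continuous.continuousOn hH2.differentiableOn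
  have hξneg : ξ * deriv (deriv (deriv H)) ξ < 0 := by
    rw [hslope, h20, sub_zero, sub_zero]
    exact mul_neg_of_pos_of_neg hξ.1 (div_neg_of_neg_of_pos (hconc x hx) hx)
  have hφξ : HasDerivAt φ 0 ξ := (hasDerivAt_const ξ 0).congr_of_eventuallyEq
    (eventuallyEq_of_mem (Ioo_mem_nhds hξ.1 hξ.2) fun t ht => hzero t (Ioo_subset_Icc_self ht))
  exact hξneg.ne ((hφ' ξ).unique hφξ)

theorem strictMonoOn_one_sub_deriv_add_mul_deriv_deriv (hH : ContDiff ℝ 3 H) {a : ℝ}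
    (ha : 0 ≤ a) (h3 : ∀ x > a, 0 < deriv (deriv (deriv H)) x) :
    StrictMonoOn (fun x => 1 - deriv H x + x * deriv (deriv H) x) (Ici a) := by
  have hφ' := hasDerivAt_one_sub_deriv_add_mul_deriv_deriv hH
  refine strictMonoOn_of_deriv_pos (convex_Ici a)
    (continuous_iff_continuousAt.2 fun x => (hφ' x).continuousAt).continuousOn fun x hx => ?_
  rw [interior_Ici] at hx
  rw [(hφ' x).deriv]
  exact mul_pos (ha.trans_lt hx) (h3 x hx)

theorem exists_sign_change_one_sub_deriv_add_mul_deriv_deriv (hH : ContDiff ℝ 3 H) {a b : ℝ}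
    (ha : 0 < a) (hab : a ≤ b) (hb : 0 < 1 - deriv H b + b * deriv (deriv H) b)
    (h1 : deriv H 0 = 1) (h20 : deriv (deriv H) 0 = 0)
    (hconc : ∀ x > 0, deriv (deriv H) x < 0)
    (h3a : ∀ x ∈ Icc 0 a, deriv (deriv (deriv H)) x ≤ 0)
    (h3b : ∀ x > a, 0 < deriv (deriv (deriv H)) x) :
    ∃ c > (0:ℝ), (∀ x, 0 < x → x < c → 1 - deriv H x + x * deriv (deriv H) x < 0) ∧
      ∀ x, c < x → 0 < 1 - deriv H x + x * deriv (deriv H) x := by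
  have hφ : Differentiable ℝ fun x => 1 - deriv H x + x * deriv (deriv H) x :=
    fun x => (hasDerivAt_one_sub_deriv_add_mul_deriv_deriv hH x).differentiableAt
  obtain ⟨c, hc, -, -, hneg, hpos⟩ := exists_pos_zero_of_neg_of_strictMonoOn ha
    (one_sub_deriv_add_mul_deriv_deriv_neg hH h1 h20 hconc h3a)
    (strictMonoOn_one_sub_deriv_add_mul_deriv_deriv hH ha.le h3b) hab hφ.continuous.continuousOn hb
  exact ⟨c, hc, hneg, hpos⟩

end

theorem stmt_5_general (H : ℝ → ℝ) (zH : ℝ) (hzH : 0 < zH)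
    (hC3 : ContDiff ℝ 3 H)
    (hodd : ∀ x, H (-x) = -H x)
    (h0 : H 0 = 0) (h1 : deriv H 0 = 1)
    (hpos : ∀ x, 0 < deriv H x)
    (hconc : ∀ x > (0:ℝ), deriv (deriv H) x < 0)
    (h3a : ∀ x : ℝ, |x| ≤ zH → deriv (deriv (deriv H)) x ≤ 0)
    (h3b : ∀ x : ℝ, zH < |x| → 0 < deriv (deriv (deriv H)) x)
    (hlim1 : Filter.Tendsto H Filter.atTop (nhds 1))
    (G : ℝ → ℝ) (hG : G = fun x => x * (1 + deriv H x) - 2 * H x) :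
    ∃ d₁ > (0:ℝ), G d₁ = 0 ∧ (∀ x > (0:ℝ), G x = 0 → x = d₁) ∧
      (∀ x, 0 < x → x < d₁ → G x < 0) ∧ (∀ x, d₁ < x → 0 < G x) := by
  subst hG
  have hG' := hasDerivAt_mul_one_add_deriv_sub_two_mul (hC3.of_le (by norm_num))
  have hGdiff : Differentiable ℝ _ := fun x => (hG' x).differentiableAt
  have htop := tendsto_mul_one_add_deriv_sub_two_mul_atTop (hC3.differentiable (by norm_num))
    (fun x => (hpos x).le) hlim1
  obtain ⟨b, hzb, hG'b⟩ := exists_ge_deriv_pos_of_tendsto_atTop hGdiff htop zH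
  rw [(hG' b).deriv] at hG'b
  obtain ⟨c, hc, hG'neg, hG'pos⟩ := exists_sign_change_one_sub_deriv_add_mul_deriv_deriv hC3 hzH
    hzb hG'b h1 (deriv_deriv_eq_zero_of_odd hodd) hconc
    (fun x hx => h3a x ((abs_of_nonneg hx.1).trans_le hx.2))
    fun x hx => h3b x (hx.trans_eq (abs_of_pos (hzH.trans hx)).symm)
  refine exists_pos_zero_of_deriv_neg_of_deriv_pos hc hGdiff (by simp [h0]) (fun x hx hxc => ?_)
    (fun x hx => ?_) htop
  · exact (hG' x).deriv ▸ hG'neg x hx hxc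
  · exact (hG' x).deriv ▸ hG'pos x hx

theorem stmt_5 (H : ℝ → ℝ) (zH : ℝ) (hzH : 0 < zH)
    (hC3 : ContDiff ℝ 3 H)
    (hodd : ∀ x, H (-x) = -H x)
    (h0 : H 0 = 0) (h1 : deriv H 0 = 1)
    (hpos : ∀ x, 0 < deriv H x)
    (hconc : ∀ x > (0:ℝ), deriv (deriv H) x < 0)
    (h3a : ∀ x : ℝ, |x| ≤ zH → deriv (deriv (deriv H)) x ≤ 0)
    (h3b : ∀ x : ℝ, zH < |x| → 0 < deriv (deriv (deriv H)) x)
    (hlim1 : Filter.Tendsto H Filter.atTop (nhds 1))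
    (hlim2 : Filter.Tendsto H Filter.atBot (nhds (-1)))
    (G : ℝ → ℝ) (hG : G = fun x => x * (1 + deriv H x) - 2 * H x) :
    ∃ d₁ > (0:ℝ), G d₁ = 0 ∧ (∀ x > (0:ℝ), G x = 0 → x = d₁) ∧
      (∀ x, 0 < x → x < d₁ → G x < 0) ∧ (∀ x, d₁ < x → 0 < G x) :=
  stmt_5_general H zH hzH hC3 hodd h0 h1 hpos hconc h3a h3b hlim1 G hG
end

section
/- Define f(x, μ) = μ H(x) - x(μ - x/2) for x ≥ 0, where H satisfies (HT) and μ₁ = d₁/(1 - H'(d₁)) with d₁ the unique positive root of x(1+H'(x)) - 2H(x). Then for all 0 ≤ μ ≤ μ₁ and all x ≥ 0, f(x, μ) ≥ 0, with equality only when x = 0, or when x = d₁ and μ = μ₁. -/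
/-!
For `x > 0` write `f(x, μ) = x² (1/2 - μ r(x))` with `r(x) = (x - H x) / x²` (`excessRatio`).
Then `r'(x) = -ψ(x) / x³` with `ψ(x) = x (1 + H'(x)) - 2 H(x)`, whose only positive zero is `d₁`.
Near `0`, `ψ(0) = ψ'(0) = 0` and `ψ'' = x H''' ≤ 0`, so `ψ < 0` on `(0, d₁)`; for large `x`,
`ψ(x) > x - 2 > 0` because `H < 1`, so `ψ > 0` on `(d₁, ∞)`. Hence `r` attains its strict maximum
over `(0, ∞)` at `d₁`, where the root equation gives `μ₁ r(d₁) = 1/2`. Since `r > 0` by concavity,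
`μ r(x) ≤ μ₁ r(d₁) = 1/2` for `0 ≤ μ ≤ μ₁`, with equality only for `x = d₁` and `μ = μ₁`.
-/

open Set

noncomputable section

def psi (H : ℝ → ℝ) (x : ℝ) : ℝ := x * (1 + deriv H x) - 2 * H x

def excessRatio (H : ℝ → ℝ) (x : ℝ) : ℝ := (x - H x) / x ^ 2

end

theorem mul_le_mul_of_strict_max {r : ℝ → ℝ} {d x μ μ' : ℝ} (hμ : μ ≤ μ') (hμ' : 0 < μ')
    (hrx : 0 < r x) (hmax : x ≠ d → r x < r d) :
    μ * r x ≤ μ' * r d ∧ (μ * r x = μ' * r d → x = d ∧ μ = μ') := by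
  have hμr : μ * r x ≤ μ' * r x := mul_le_mul_of_nonneg_right hμ hrx.le
  by_cases hxd : x = d
  · subst hxd
    exact ⟨hμr, fun h => ⟨rfl, by nlinarith⟩⟩
  · have hlt : μ' * r x < μ' * r d := mul_lt_mul_of_pos_left (hmax hxd) hμ'
    exact ⟨by linarith, fun h => absurd h (by linarith)⟩

theorem IsPreconnected.neg_of_forall_ne_zero {α : Type*} [TopologicalSpace α] {s : Set α}
    (hs : IsPreconnected s) {φ : α → ℝ} (hφ : ContinuousOn φ s) (hne : ∀ x ∈ s, φ x ≠ 0)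
    {a : α} (ha : a ∈ s) (hφa : φ a < 0) {x : α} (hx : x ∈ s) : φ x < 0 := by
  by_contra! h
  obtain ⟨y, hy, hy0⟩ := hs.intermediate_value ha hx hφ ⟨hφa.le, h⟩
  exact hne y hy hy0

theorem IsPreconnected.pos_of_forall_ne_zero {α : Type*} [TopologicalSpace α] {s : Set α}
    (hs : IsPreconnected s) {φ : α → ℝ} (hφ : ContinuousOn φ s) (hne : ∀ x ∈ s, φ x ≠ 0)
    {a : α} (ha : a ∈ s) (hφa : 0 < φ a) {x : α} (hx : x ∈ s) : 0 < φ x :=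
  neg_neg_iff_pos.1 <| hs.neg_of_forall_ne_zero hφ.neg (fun y hy => neg_ne_zero.2 (hne y hy)) ha
    (neg_neg_of_pos hφa) hx

theorem nonpos_of_hasDerivAt_of_nonpos {φ φ' : ℝ → ℝ} {z : ℝ} (hφ : ∀ x, HasDerivAt φ (φ' x) x)
    (h0 : φ 0 = 0) (hφ' : ∀ x ∈ Ioo 0 z, φ' x ≤ 0) {x : ℝ} (hx : x ∈ Icc 0 z) : φ x ≤ 0 := by
  have hanti : AntitoneOn φ (Icc 0 z) :=
    antitoneOn_of_hasDerivWithinAt_nonpos (convex_Icc 0 z)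
      (HasDerivAt.continuousOn fun x _ => hφ x) (fun x _ => (hφ x).hasDerivWithinAt)
      (by rwa [interior_Icc])
  simpa only [h0] using hanti ⟨le_rfl, hx.1.trans hx.2⟩ hx hx.1

section

variable {H : ℝ → ℝ}

theorem deriv_lt_one_of_deriv_deriv_neg (hH : Continuous (deriv H)) (h1 : deriv H 0 = 1)
    (hconc : ∀ x > 0, deriv (deriv H) x < 0) {x : ℝ} (hx : 0 < x) : deriv H x < 1 := by
  have hanti : StrictAntiOn (deriv H) (Ici 0) :=
    strictAntiOn_of_deriv_neg (convex_Ici 0) hH.continuousOn (by rw [interior_Ici]; exact hconc)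
  simpa only [h1] using hanti self_mem_Ici hx.le hx

theorem lt_self_of_deriv_lt_one (hH : Differentiable ℝ H) (h0 : H 0 = 0)
    (hlt : ∀ x > 0, deriv H x < 1) {x : ℝ} (hx : 0 < x) : H x < x := by
  have := (convex_Ici (0 : ℝ)).image_sub_lt_mul_sub_of_deriv_lt hH.continuous.continuousOn
    hH.differentiableOn (by rw [interior_Ici]; exact hlt) 0 self_mem_Ici x hx.le hx
  simpa [h0] using this

theorem hasDerivAt_psi {x : ℝ} (hH : DifferentiableAt ℝ H x)
    (hH' : DifferentiableAt ℝ (deriv H) x) :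
    HasDerivAt (psi H) (1 - deriv H x + x * deriv (deriv H) x) x :=
  (((hasDerivAt_id x).mul (hH'.hasDerivAt.const_add 1)).sub
    (hH.hasDerivAt.const_mul 2)).congr_deriv (by simp only [id]; ring)

theorem continuous_psi (hH : Continuous H) (hH' : Continuous (deriv H)) :
    Continuous (psi H) := by
  unfold psi
  fun_prop

theorem psi_nonpos_of_deriv_deriv_deriv_nonpos (hH : ContDiff ℝ 3 H) (h0 : H 0 = 0)
    (h1 : deriv H 0 = 1) {z : ℝ} (h3 : ∀ x ∈ Ioo 0 z, deriv (deriv (deriv H)) x ≤ 0) {x : ℝ}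
    (hx : x ∈ Icc 0 z) : psi H x ≤ 0 := by
  have hH₂ : ContDiff ℝ 2 (deriv H) := hH.deriv'
  have hH₁ : ContDiff ℝ 1 (deriv (deriv H)) := hH₂.deriv'
  have hdiff₀ : Differentiable ℝ H := hH.differentiable (by norm_num)
  have hdiff₁ : Differentiable ℝ (deriv H) := hH₂.differentiable (by norm_num)
  have hdiff₂ : Differentiable ℝ (deriv (deriv H)) := hH₁.differentiable one_ne_zero
  refine nonpos_of_hasDerivAt_of_nonpos (fun y => hasDerivAt_psi (hdiff₀ y) (hdiff₁ y))
    (by simp [psi, h0]) (fun y hy => ?_) hx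
  have hψ' : ∀ t, HasDerivAt (fun t => 1 - deriv H t + t * deriv (deriv H) t)
      (t * deriv (deriv (deriv H)) t) t := fun t =>
    (((hdiff₁ t).hasDerivAt.const_sub 1).add
      ((hasDerivAt_id t).mul (hdiff₂ t).hasDerivAt)).congr_deriv (by simp only [id]; ring)
  exact nonpos_of_hasDerivAt_of_nonpos hψ' (by simp [h1])
    (fun t ht => mul_nonpos_of_nonneg_of_nonpos ht.1.le (h3 t ⟨ht.1, ht.2.trans hy.2⟩))
    ⟨hy.1.le, le_rfl⟩

theorem psi_pos_of_two_le {x : ℝ} (hx : 2 ≤ x) (hH' : 0 ≤ deriv H x) (hH : H x < 1) :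
    0 < psi H x := by
  unfold psi
  nlinarith

theorem psi_neg_of_mem_Ioo (hH : ContDiff ℝ 3 H) (h0 : H 0 = 0) (h1 : deriv H 0 = 1) {z : ℝ}
    (hz : 0 < z) (h3 : ∀ x ∈ Ioo 0 z, deriv (deriv (deriv H)) x ≤ 0) {d : ℝ} (hd : 0 < d)
    (hne : ∀ x > 0, x ≠ d → psi H x ≠ 0) {x : ℝ} (hx : x ∈ Ioo 0 d) : psi H x < 0 := by
  have hm : 0 < min z d := lt_min hz hd
  have hc : min z d / 2 ∈ Ioo 0 d := ⟨by positivity, by linarith [min_le_right z d]⟩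
  have hcz : min z d / 2 ∈ Icc 0 z := ⟨hc.1.le, by linarith [min_le_left z d]⟩
  have hψc : psi H (min z d / 2) < 0 :=
    (psi_nonpos_of_deriv_deriv_deriv_nonpos hH h0 h1 h3 hcz).lt_of_ne (hne _ hc.1 hc.2.ne)
  exact isPreconnected_Ioo.neg_of_forall_ne_zero
    (continuous_psi hH.continuous (hH.continuous_deriv (by norm_num))).continuousOn
    (fun y hy => hne y hy.1 hy.2.ne) hc hψc hx

theorem psi_pos_of_lt (hH : Continuous H) (hH' : Continuous (deriv H))
    (hmono : ∀ x, 0 ≤ deriv H x) (hlt : ∀ x, H x < 1) {d : ℝ} (hd : 0 < d)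
    (hne : ∀ x > 0, x ≠ d → psi H x ≠ 0) {x : ℝ} (hx : d < x) : 0 < psi H x :=
  isPreconnected_Ioi.pos_of_forall_ne_zero (continuous_psi hH hH').continuousOn
    (fun y hy => hne y (hd.trans hy) hy.ne') (a := d + 2) (show d < d + 2 by linarith)
    (psi_pos_of_two_le (by linarith) (hmono _) (hlt _)) hx

theorem hasDerivAt_excessRatio {x : ℝ} (hH : DifferentiableAt ℝ H x) (hx : x ≠ 0) :
    HasDerivAt (excessRatio H) (-psi H x / x ^ 3) x := by
  refine (((hasDerivAt_id' x).sub hH.hasDerivAt).div (hasDerivAt_pow 2 x)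
    (pow_ne_zero 2 hx)).congr_deriv ?_
  simp only [psi, Pi.sub_apply]
  field_simp
  ring

theorem excessRatio_lt_excessRatio_of_psi (hH : Differentiable ℝ H) {d : ℝ} (hd : 0 < d)
    (hneg : ∀ x ∈ Ioo 0 d, psi H x < 0) (hpos : ∀ x ∈ Ioi d, 0 < psi H x) {x : ℝ}
    (hx : 0 < x) (hxd : x ≠ d) : excessRatio H x < excessRatio H d := by
  have hderiv : ∀ y > 0, HasDerivAt (excessRatio H) (-psi H y / y ^ 3) y :=
    fun y hy => hasDerivAt_excessRatio (hH y) hy.ne'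
  rcases hxd.lt_or_gt with hlt | hgt
  · have hmono : StrictMonoOn (excessRatio H) (Ioc 0 d) := by
      refine strictMonoOn_of_hasDerivWithinAt_pos (f' := fun y => -psi H y / y ^ 3)
        (convex_Ioc 0 d)
        (HasDerivAt.continuousOn fun y hy => hderiv y hy.1) (fun y hy => ?_) (fun y hy => ?_) <;>
        rw [interior_Ioc] at hy
      · exact (hderiv y hy.1).hasDerivWithinAt
      · exact div_pos (neg_pos.2 (hneg y hy)) (pow_pos hy.1 3)
    exact hmono ⟨hx, hlt.le⟩ ⟨hd, le_rfl⟩ hlt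
  · have hanti : StrictAntiOn (excessRatio H) (Ici d) := by
      refine strictAntiOn_of_hasDerivWithinAt_neg (f' := fun y => -psi H y / y ^ 3)
        (convex_Ici d)
        (HasDerivAt.continuousOn fun y hy => hderiv y (hd.trans_le hy)) (fun y hy => ?_)
        (fun y hy => ?_) <;> rw [interior_Ici] at hy
      · exact (hderiv y (hd.trans hy)).hasDerivWithinAt
      · exact div_neg_of_neg_of_pos (neg_neg_of_pos (hpos y hy)) (pow_pos (hd.trans hy) 3)
    exact hanti self_mem_Ici hgt.le hgt

theorem excessRatio_lt_excessRatio (hH : ContDiff ℝ 3 H) (h0 : H 0 = 0) (h1 : deriv H 0 = 1)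
    {z : ℝ} (hz : 0 < z) (h3 : ∀ x ∈ Ioo 0 z, deriv (deriv (deriv H)) x ≤ 0)
    (hmono : ∀ x, 0 ≤ deriv H x) (hlt : ∀ x, H x < 1) {d : ℝ} (hd : 0 < d)
    (hne : ∀ x > 0, x ≠ d → psi H x ≠ 0) {x : ℝ} (hx : 0 < x) (hxd : x ≠ d) :
    excessRatio H x < excessRatio H d :=
  excessRatio_lt_excessRatio_of_psi (hH.differentiable (by norm_num)) hd
    (fun _ => psi_neg_of_mem_Ioo hH h0 h1 hz h3 hd hne)
    (fun _ => psi_pos_of_lt hH.continuous (hH.continuous_deriv (by norm_num)) hmono hlt hd hne)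
    hx hxd

theorem excessRatio_pos {x : ℝ} (hx : 0 < x) (hHx : H x < x) : 0 < excessRatio H x :=
  div_pos (sub_pos.2 hHx) (pow_pos hx 2)

theorem div_one_sub_deriv_mul_excessRatio {d : ℝ} (hd : d ≠ 0) (hroot : psi H d = 0)
    (hH' : deriv H d ≠ 1) : d / (1 - deriv H d) * excessRatio H d = 1 / 2 := by
  have : 1 - deriv H d ≠ 0 := sub_ne_zero.2 hH'.symm
  unfold excessRatio
  unfold psi at hroot
  field_simp
  linarith

theorem sq_mul_half_sub_mul_excessRatio {x : ℝ} (hx : x ≠ 0) (μ : ℝ) :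
    x ^ 2 * (1 / 2 - μ * excessRatio H x) = μ * H x - x * (μ - x / 2) := by
  unfold excessRatio
  field_simp
  ring

end

theorem stmt_7_general (H : ℝ → ℝ) (zH : ℝ) (hzH : 0 < zH)
    (hC3 : ContDiff ℝ 3 H)
    (h0 : H 0 = 0) (h1 : deriv H 0 = 1)
    (hpos : ∀ x, 0 < deriv H x)
    (hconc : ∀ x > (0:ℝ), deriv (deriv H) x < 0)
    (h3a : ∀ x : ℝ, |x| ≤ zH → deriv (deriv (deriv H)) x ≤ 0)
    (hlim1 : Filter.Tendsto H Filter.atTop (nhds 1))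
    (d₁ : ℝ) (hd₁ : 0 < d₁)
    (hroot : d₁ * (1 + deriv H d₁) = 2 * H d₁)
    (huniq : ∀ x > (0:ℝ), x * (1 + deriv H x) = 2 * H x → x = d₁)
    (μ₁ : ℝ) (hμ₁ : μ₁ = d₁ / (1 - deriv H d₁))
    (f : ℝ → ℝ → ℝ) (hf : f = fun x μ => μ * H x - x * (μ - x / 2)) :
    ∀ μ x : ℝ, 0 ≤ μ → μ ≤ μ₁ → 0 ≤ x →
      0 ≤ f x μ ∧ (f x μ = 0 → x = 0 ∨ (x = d₁ ∧ μ = μ₁)) := by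
  intro μ x _ hμle hx
  have hdiff : Differentiable ℝ H := hC3.differentiable (by norm_num)
  have hH'lt : ∀ y > 0, deriv H y < 1 := fun y =>
    deriv_lt_one_of_deriv_deriv_neg (hC3.continuous_deriv (by norm_num)) h1 hconc
  have hHlt : ∀ y, H y < 1 := fun y =>
    (strictMono_of_deriv_pos hpos (lt_add_one y)).trans_le
      ((strictMono_of_deriv_pos hpos).monotone.ge_of_tendsto hlim1 _)
  have hr_lt : ∀ y > 0, y ≠ d₁ → excessRatio H y < excessRatio H d₁ := fun y =>
    excessRatio_lt_excessRatio hC3 h0 h1 hzH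
      (fun t ht => h3a t ((abs_of_pos ht.1).trans_le ht.2.le)) (fun t => (hpos t).le) hHlt hd₁
      (fun t ht htd h => htd (huniq t ht (sub_eq_zero.1 h)))
  have hμ₁r : μ₁ * excessRatio H d₁ = 1 / 2 := hμ₁ ▸
    div_one_sub_deriv_mul_excessRatio hd₁.ne' (sub_eq_zero.2 hroot) (hH'lt d₁ hd₁).ne
  have hμ₁pos : 0 < μ₁ := hμ₁ ▸ div_pos hd₁ (sub_pos.2 (hH'lt d₁ hd₁))
  rcases hx.eq_or_lt with rfl | hx
  · simp [hf, h0]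
  have hfx : f x μ = x ^ 2 * (1 / 2 - μ * excessRatio H x) :=
    hf ▸ (sq_mul_half_sub_mul_excessRatio hx.ne' μ).symm
  obtain ⟨hle, heq⟩ := mul_le_mul_of_strict_max hμle hμ₁pos
    (excessRatio_pos hx (lt_self_of_deriv_lt_one hdiff h0 hH'lt hx)) (hr_lt x hx)
  rw [hμ₁r] at hle heq
  rw [hfx]
  refine ⟨mul_nonneg (sq_nonneg x) (sub_nonneg.2 hle), fun h => Or.inr (heq ?_)⟩
  exact (sub_eq_zero.1 ((mul_eq_zero.1 h).resolve_left (pow_ne_zero 2 hx.ne'))).symm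

theorem stmt_7 (H : ℝ → ℝ) (zH : ℝ) (hzH : 0 < zH)
    (hC3 : ContDiff ℝ 3 H)
    (hodd : ∀ x, H (-x) = -H x)
    (h0 : H 0 = 0) (h1 : deriv H 0 = 1)
    (hpos : ∀ x, 0 < deriv H x)
    (hconc : ∀ x > (0:ℝ), deriv (deriv H) x < 0)
    (h3a : ∀ x : ℝ, |x| ≤ zH → deriv (deriv (deriv H)) x ≤ 0)
    (h3b : ∀ x : ℝ, zH < |x| → 0 < deriv (deriv (deriv H)) x)
    (hlim1 : Filter.Tendsto H Filter.atTop (nhds 1))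
    (hlim2 : Filter.Tendsto H Filter.atBot (nhds (-1)))
    (d₁ : ℝ) (hd₁ : 0 < d₁)
    (hroot : d₁ * (1 + deriv H d₁) = 2 * H d₁)
    (huniq : ∀ x > (0:ℝ), x * (1 + deriv H x) = 2 * H x → x = d₁)
    (μ₁ : ℝ) (hμ₁ : μ₁ = d₁ / (1 - deriv H d₁))
    (f : ℝ → ℝ → ℝ) (hf : f = fun x μ => μ * H x - x * (μ - x / 2)) :
    ∀ μ x : ℝ, 0 ≤ μ → μ ≤ μ₁ → 0 ≤ x →
      0 ≤ f x μ ∧ (f x μ = 0 → x = 0 ∨ (x = d₁ ∧ μ = μ₁)) :=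
  stmt_7_general H zH hzH hC3 h0 h1 hpos hconc h3a hlim1 d₁ hd₁ hroot huniq μ₁ hμ₁ f hf
end

section
/- Suppose μ ≤ μ₁ and there exist s₁ ∈ (-1/√g, μ) and z₁ < s₁ satisfying the system: -(z₁² - s₁²)/2 + μ H(z₁ - s₁) = 0 and z₁ = μ H'(s₁ - z₁). Then we reach a contradiction; i.e. no such pair (s₁, z₁) exists. Equivalently, for all s ∈ [-1/√g, μ) and z < s, φ(s,z) := -(z² - s²)/2 + μ H(z - s) cannot vanish with ∂_z φ(s,z) = 0. -/
/-!
Write `f x = x (1 + H' x) - 2 H x`, so `f 0 = f' 0 = 0` and `f'' x = x H''' x`. The sign pattern of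
`H'''` makes `f'` nonpositive on `[0, zH]` and increasing afterwards; since `d₁` is the only positive
zero of `f`, this forces `f < 0` on `(0, d₁)` and `f' ≥ 0` on `[d₁, ∞)`, so that
`x ↦ x / (1 - H' x)` is monotone on `[d₁, ∞)`.
For a solution `(s₁, z₁)` put `d = s₁ - z₁ > 0`. The two equations give
`μ f d = d (μ - s₁) > 0` and `d < μ (1 - H' d)`, hence `d > d₁` and
`μ > d / (1 - H' d) ≥ d₁ / (1 - H' d₁) = μ₁`, contradicting `μ ≤ μ₁`.
-/

open Set

/-- Twice the error of the trapezoidal rule for `∫₀ˣ H'` when `H 0 = 0` and `H' 0 = 1`. -/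
noncomputable def trapezoidDefect (H : ℝ → ℝ) (x : ℝ) : ℝ :=
  x * (1 + deriv H x) - 2 * H x

variable {H : ℝ → ℝ} {zH d₁ x : ℝ}

lemma trapezoidDefect_eq_zero_iff :
    trapezoidDefect H x = 0 ↔ x * (1 + deriv H x) = 2 * H x :=
  sub_eq_zero

lemma hasDerivAt_trapezoidDefect (hH : ContDiff ℝ 2 H) (x : ℝ) :
    HasDerivAt (trapezoidDefect H) (1 - deriv H x + x * deriv (deriv H) x) x := by
  have hH₁ := (hH.differentiable two_ne_zero x).hasDerivAt
  have hH₂ := (hH.differentiable_deriv_two x).hasDerivAt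
  refine (((hasDerivAt_id' x).mul (hH₂.const_add 1)).sub (hH₁.const_mul 2)).congr_deriv ?_
  ring

lemma deriv_trapezoidDefect (hH : ContDiff ℝ 2 H) :
    deriv (trapezoidDefect H) = fun x => 1 - deriv H x + x * deriv (deriv H) x :=
  funext fun x => (hasDerivAt_trapezoidDefect hH x).deriv

lemma hasDerivAt_deriv_trapezoidDefect (hH : ContDiff ℝ 3 H) (x : ℝ) :
    HasDerivAt (deriv (trapezoidDefect H)) (x * deriv (deriv (deriv H)) x) x := by
  have hH' : ContDiff ℝ 2 (deriv H) := hH.deriv'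
  rw [deriv_trapezoidDefect (hH.of_le (by norm_num))]
  have hH₂ := (hH'.differentiable two_ne_zero x).hasDerivAt
  have hH₃ := (hH'.differentiable_deriv_two x).hasDerivAt
  refine ((hH₂.const_sub 1).add ((hasDerivAt_id' x).mul hH₃)).congr_deriv ?_
  ring

lemma continuous_trapezoidDefect (hH : ContDiff ℝ 2 H) : Continuous (trapezoidDefect H) :=
  continuous_iff_continuousAt.mpr fun x => (hasDerivAt_trapezoidDefect hH x).continuousAt

lemma deriv_trapezoidDefect_nonpos (hH : ContDiff ℝ 3 H) (h1 : deriv H 0 = 1)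
    (h3 : ∀ x, 0 ≤ x → x ≤ zH → deriv (deriv (deriv H)) x ≤ 0) (hx₀ : 0 ≤ x) (hxz : x ≤ zH) :
    deriv (trapezoidDefect H) x ≤ 0 := by
  have hanti : AntitoneOn (deriv (trapezoidDefect H)) (Icc 0 zH) :=
    antitoneOn_of_hasDerivWithinAt_nonpos (convex_Icc 0 zH)
      (fun y _ => (hasDerivAt_deriv_trapezoidDefect hH y).continuousAt.continuousWithinAt)
      (fun y _ => (hasDerivAt_deriv_trapezoidDefect hH y).hasDerivWithinAt)
      (fun y hy => by
        rw [interior_Icc] at hy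
        exact mul_nonpos_of_nonneg_of_nonpos hy.1.le (h3 y hy.1.le hy.2.le))
  have hzero : deriv (trapezoidDefect H) 0 = 0 := by
    simp [deriv_trapezoidDefect (hH.of_le (by norm_num)), h1]
  simpa [hzero] using hanti ⟨le_rfl, hx₀.trans hxz⟩ ⟨hx₀, hxz⟩ hx₀

lemma monotoneOn_deriv_trapezoidDefect (hH : ContDiff ℝ 3 H) (hzH : 0 ≤ zH)
    (h3 : ∀ x, zH < x → 0 ≤ deriv (deriv (deriv H)) x) :
    MonotoneOn (deriv (trapezoidDefect H)) (Ici zH) :=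
  monotoneOn_of_hasDerivWithinAt_nonneg (convex_Ici zH)
    (fun y _ => (hasDerivAt_deriv_trapezoidDefect hH y).continuousAt.continuousWithinAt)
    (fun y _ => (hasDerivAt_deriv_trapezoidDefect hH y).hasDerivWithinAt)
    (fun y hy => by
      rw [interior_Ici] at hy
      exact mul_nonneg (hzH.trans hy.le) (h3 y hy))

lemma antitoneOn_trapezoidDefect (hH : ContDiff ℝ 2 H)
    (hf' : ∀ y, 0 ≤ y → y ≤ x → deriv (trapezoidDefect H) y ≤ 0) :
    AntitoneOn (trapezoidDefect H) (Icc 0 x) :=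
  antitoneOn_of_hasDerivWithinAt_nonpos (convex_Icc 0 x)
    (continuous_trapezoidDefect hH).continuousOn
    (fun y _ => (hasDerivAt_trapezoidDefect hH y).hasDerivWithinAt)
    (fun y hy => by
      rw [interior_Icc] at hy
      rw [← (hasDerivAt_trapezoidDefect hH y).deriv]
      exact hf' y hy.1.le hy.2.le)

lemma trapezoidDefect_nonpos (hH : ContDiff ℝ 3 H) (h0 : H 0 = 0) (h1 : deriv H 0 = 1)
    (h3 : ∀ x, 0 ≤ x → x ≤ zH → deriv (deriv (deriv H)) x ≤ 0) (hx₀ : 0 ≤ x) (hxz : x ≤ zH) :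
    trapezoidDefect H x ≤ 0 := by
  have hanti := antitoneOn_trapezoidDefect (hH.of_le (by norm_num)) fun y hy₀ hyx =>
    deriv_trapezoidDefect_nonpos hH h1 h3 hy₀ (hyx.trans hxz)
  simpa [trapezoidDefect, h0] using hanti ⟨le_rfl, hx₀⟩ ⟨hx₀, le_rfl⟩ hx₀

lemma lt_of_trapezoidDefect_pos (hH : ContDiff ℝ 3 H) (h0 : H 0 = 0) (h1 : deriv H 0 = 1)
    (hzH : 0 < zH) (h3 : ∀ x, 0 ≤ x → x ≤ zH → deriv (deriv (deriv H)) x ≤ 0)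
    (huniq : ∀ x > 0, trapezoidDefect H x = 0 → x = d₁) (hx : 0 < x)
    (hfx : 0 < trapezoidDefect H x) : d₁ < x := by
  set a := min zH x
  have ha : 0 < a := lt_min hzH hx
  have hfa : trapezoidDefect H a ≤ 0 :=
    trapezoidDefect_nonpos hH h0 h1 h3 ha.le (min_le_left _ _)
  obtain ⟨c, hc, hfc⟩ := intermediate_value_Icc (min_le_right zH x)
    (continuous_trapezoidDefect (hH.of_le (by norm_num))).continuousOn ⟨hfa, hfx.le⟩
  have hcd : c = d₁ := huniq c (ha.trans_le hc.1) hfc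
  refine lt_of_le_of_ne (hcd ▸ hc.2) ?_
  rintro rfl
  exact hfx.ne' (hcd ▸ hfc)

lemma deriv_trapezoidDefect_nonneg (hH : ContDiff ℝ 3 H) (h0 : H 0 = 0) (h1 : deriv H 0 = 1)
    (hzH : 0 ≤ zH) (h3a : ∀ x, 0 ≤ x → x ≤ zH → deriv (deriv (deriv H)) x ≤ 0)
    (h3b : ∀ x, zH < x → 0 ≤ deriv (deriv (deriv H)) x) (hd₁ : 0 < d₁)
    (hroot : trapezoidDefect H d₁ = 0) (huniq : ∀ x > 0, trapezoidDefect H x = 0 → x = d₁)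
    (hx : d₁ ≤ x) : 0 ≤ deriv (trapezoidDefect H) x := by
  by_contra! hneg
  -- Otherwise `f' ≤ 0` on `[0, x]`, so `f` vanishes on all of `[0, d₁]`.
  have hf' : ∀ y, 0 ≤ y → y ≤ x → deriv (trapezoidDefect H) y ≤ 0 := fun y hy₀ hyx => by
    rcases le_or_gt y zH with hyz | hzy
    · exact deriv_trapezoidDefect_nonpos hH h1 h3a hy₀ hyz
    · exact (monotoneOn_deriv_trapezoidDefect hH hzH h3b hzy.le (hzy.le.trans hyx) hyx).trans
        hneg.le
  have hanti := antitoneOn_trapezoidDefect (hH.of_le (by norm_num)) hf'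
  have hf0 : trapezoidDefect H 0 = 0 := by simp [trapezoidDefect, h0]
  have hle := hanti ⟨le_rfl, hd₁.le.trans hx⟩ ⟨by linarith, by linarith⟩ (by linarith : 0 ≤ d₁ / 2)
  have hge := hanti ⟨by linarith, by linarith⟩ ⟨hd₁.le, hx⟩ (by linarith : d₁ / 2 ≤ d₁)
  have hmid : trapezoidDefect H (d₁ / 2) = 0 := by linarith
  linarith [huniq (d₁ / 2) (by positivity) hmid]

lemma monotoneOn_div_one_sub_deriv (hH : ContDiff ℝ 2 H) (hlt : ∀ x > 0, deriv H x < 1)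
    (hd₁ : 0 < d₁) (hf' : ∀ x, d₁ ≤ x → 0 ≤ deriv (trapezoidDefect H) x) :
    MonotoneOn (fun x => x / (1 - deriv H x)) (Ici d₁) := by
  have hderiv : ∀ x ∈ Ici d₁, HasDerivAt (fun x => x / (1 - deriv H x))
      (deriv (trapezoidDefect H) x / (1 - deriv H x) ^ 2) x := fun x hx => by
    have hden : 1 - deriv H x ≠ 0 := (sub_pos.mpr (hlt x (hd₁.trans_le hx))).ne'
    refine ((hasDerivAt_id' x).div ((hH.differentiable_deriv_two x).hasDerivAt.const_sub 1)
      hden).congr_deriv ?_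
    rw [deriv_trapezoidDefect hH]
    ring
  refine monotoneOn_of_hasDerivWithinAt_nonneg (convex_Ici d₁)
    (fun x hx => (hderiv x hx).continuousAt.continuousWithinAt)
    (fun x hx => (hderiv x (interior_subset hx)).hasDerivWithinAt) fun x hx => ?_
  exact div_nonneg (hf' x (interior_subset hx)) (sq_nonneg _)

lemma mul_trapezoidDefect_sub (hodd : ∀ x, H (-x) = -H x) {μ s z : ℝ}
    (hφ : -(z ^ 2 - s ^ 2) / 2 + μ * H (z - s) = 0) (hcrit : z = μ * deriv H (s - z)) :
    μ * trapezoidDefect H (s - z) = (s - z) * (μ - s) := by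
  have hH : H (z - s) = -H (s - z) := by rw [← hodd, neg_sub]
  rw [hH] at hφ
  unfold trapezoidDefect
  linear_combination 2 * hφ - (s - z) * hcrit

theorem stmt_11_general (H : ℝ → ℝ) (zH : ℝ) (hzH : 0 < zH)
    (hC3 : ContDiff ℝ 3 H)
    (hodd : ∀ x, H (-x) = -H x)
    (h0 : H 0 = 0) (h1 : deriv H 0 = 1)
    (hH' : ∀ x > (0:ℝ), 0 < deriv H x ∧ deriv H x < 1)
    (h3a : ∀ x : ℝ, 0 ≤ x → x ≤ zH → deriv (deriv (deriv H)) x ≤ 0)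
    (h3b : ∀ x : ℝ, zH < x → 0 < deriv (deriv (deriv H)) x)
    (g : ℝ)
    (d₁ : ℝ) (hd₁ : 0 < d₁)
    (hroot : d₁ * (1 + deriv H d₁) = 2 * H d₁)
    (huniq : ∀ x > (0:ℝ), x * (1 + deriv H x) = 2 * H x → x = d₁)
    (μ₁ μ : ℝ) (hμ₁ : μ₁ = d₁ / (1 - deriv H d₁)) (hμ : μ ≤ μ₁) :
    ¬ ∃ s₁ z₁ : ℝ, -1 / Real.sqrt g < s₁ ∧ s₁ < μ ∧ z₁ < s₁ ∧
      -(z₁ ^ 2 - s₁ ^ 2) / 2 + μ * H (z₁ - s₁) = 0 ∧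
      z₁ = μ * deriv H (s₁ - z₁) := by
  rintro ⟨s₁, z₁, -, hsμ, hzs, hφ, hcrit⟩
  have huniq' : ∀ x > 0, trapezoidDefect H x = 0 → x = d₁ := fun x hx h =>
    huniq x hx (trapezoidDefect_eq_zero_iff.mp h)
  have hd : 0 < s₁ - z₁ := sub_pos.mpr hzs
  have hden : 0 < 1 - deriv H (s₁ - z₁) := sub_pos.mpr (hH' _ hd).2
  have hbelow : s₁ - z₁ < μ * (1 - deriv H (s₁ - z₁)) := by rw [mul_one_sub, ← hcrit]; linarith
  have hμ0 : 0 < μ := (pos_iff_pos_of_mul_pos (hd.trans hbelow)).mpr hden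
  have hpos : 0 < trapezoidDefect H (s₁ - z₁) := by
    refine pos_of_mul_pos_right ?_ hμ0.le
    rw [mul_trapezoidDefect_sub hodd hφ hcrit]
    exact mul_pos hd (by linarith)
  have hd₁d : d₁ < s₁ - z₁ := lt_of_trapezoidDefect_pos hC3 h0 h1 hzH h3a huniq' hd hpos
  have hmono := monotoneOn_div_one_sub_deriv (hC3.of_le (by norm_num)) (fun x hx => (hH' x hx).2)
    hd₁ fun x hx => deriv_trapezoidDefect_nonneg hC3 h0 h1 hzH.le h3a (fun y hy => (h3b y hy).le)
      hd₁ (trapezoidDefect_eq_zero_iff.mpr hroot) huniq' hx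
  have hμ₁d : μ₁ ≤ (s₁ - z₁) / (1 - deriv H (s₁ - z₁)) :=
    hμ₁ ▸ hmono self_mem_Ici (mem_Ici.mpr hd₁d.le) hd₁d.le
  have hdμ : (s₁ - z₁) / (1 - deriv H (s₁ - z₁)) < μ := (div_lt_iff₀ hden).mpr hbelow
  linarith

theorem stmt_11 (H : ℝ → ℝ) (zH : ℝ) (hzH : 0 < zH)
    (hC3 : ContDiff ℝ 3 H)
    (hodd : ∀ x, H (-x) = -H x)
    (h0 : H 0 = 0) (h1 : deriv H 0 = 1)
    (hH' : ∀ x > (0:ℝ), 0 < deriv H x ∧ deriv H x < 1)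
    (hconc : ∀ x > (0:ℝ), deriv (deriv H) x < 0)
    (h3a : ∀ x : ℝ, 0 ≤ x → x ≤ zH → deriv (deriv (deriv H)) x ≤ 0)
    (h3b : ∀ x : ℝ, zH < x → 0 < deriv (deriv (deriv H)) x)
    (hlim1 : Filter.Tendsto H Filter.atTop (nhds 1))
    (hlim2 : Filter.Tendsto H Filter.atBot (nhds (-1)))
    (g : ℝ) (hg : 0 < g)
    (d₁ : ℝ) (hd₁ : 0 < d₁)
    (hroot : d₁ * (1 + deriv H d₁) = 2 * H d₁)
    (huniq : ∀ x > (0:ℝ), x * (1 + deriv H x) = 2 * H x → x = d₁)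
    (μ₁ μ : ℝ) (hμ₁ : μ₁ = d₁ / (1 - deriv H d₁)) (hμ : μ ≤ μ₁) :
    ¬ ∃ s₁ z₁ : ℝ, -1 / Real.sqrt g < s₁ ∧ s₁ < μ ∧ z₁ < s₁ ∧
      -(z₁ ^ 2 - s₁ ^ 2) / 2 + μ * H (z₁ - s₁) = 0 ∧
      z₁ = μ * deriv H (s₁ - z₁) :=
  stmt_11_general H zH hzH hC3 hodd h0 h1 hH' h3a h3b g d₁ hd₁ hroot huniq μ₁ μ hμ₁ hμ
end
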